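/- In the polylogarithmic Lie algebra L^PL, for each natural number n the pair of elements {(ad e1)^n(e11), (ad e2)^n(e22)} is linearly independent over ℚ. -/

import Mathlib

inductive Gamma : Type
  | e1 | e11 | e2 | e22 | e12
deriving DecidableEq

noncomputable section

abbrev FL : Type := FreeLieAlgebra ℚ Gamma

/-- The five generators of the free Lie algebra. -/
def gen (x : Gamma) : FL := FreeLieAlgebra.of ℚ x

/-- The defining relations of the Lie algebra `L`. -/
def relSet : Set FL :=
  {⁅gen .e1, gen .e2⁆, ⁅gen .e11, gen .e2⁆, ⁅gen .e1, gen .e22⁆,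
   ⁅gen .e11, gen .e22⁆ - ⁅gen .e2 - gen .e1, gen .e12⁆,
   (-⁅gen .e11, gen .e12⁆) - ⁅gen .e2 - gen .e1, gen .e12⁆,
   ⁅gen .e22, gen .e12⁆ - ⁅gen .e2 - gen .e1, gen .e12⁆}

/-- The Lie ideal generated by the relations. -/
def relIdeal : LieIdeal ℚ FL := LieSubmodule.lieSpan ℚ FL relSet

/-- The Lie algebra `L`. -/
abbrev Lquot : Type := FL ⧸ relIdeal

/-- Projection `L(Γ) → L`. -/
def mkL : FL → Lquot := LieSubmodule.Quotient.mk (N := relIdeal)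

/-- The Lie ideal `N` of `L` generated by `e11`, `e22`, `e12`. -/
def NIdeal : LieIdeal ℚ Lquot :=
  LieSubmodule.lieSpan ℚ Lquot {mkL (gen .e11), mkL (gen .e22), mkL (gen .e12)}

/-- The Lie ideal `[N, N]`. -/
def NN : LieIdeal ℚ Lquot := ⁅NIdeal, NIdeal⁆

/-- The polylogarithmic Lie algebra `L^PL = L/[N,N]`. -/
abbrev LPL : Type := Lquot ⧸ NN

/-- Projection `L(Γ) → L^PL`. -/
def pl (x : FL) : LPL := LieSubmodule.Quotient.mk (N := NN) (mkL x)

def E1 : LPL := pl (gen .e1)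
def E11 : LPL := pl (gen .e11)
def E2 : LPL := pl (gen .e2)
def E22 : LPL := pl (gen .e22)
def E12 : LPL := pl (gen .e12)

/-- The adjoint action `ad z : w ↦ ⁅z, w⁆` as a linear endomorphism of `L^PL`. -/
def adPL (z : LPL) : Module.End ℚ LPL := LieAlgebra.ad ℚ LPL z

end
open Polynomial
open Polynomial
attribute [local instance 100] LieRing.ofAssociativeRing
noncomputable section MyAux

abbrev VV : Type := (Polynomial ℚ × Polynomial ℚ) × ℚ

def Tm (m : Polynomial ℚ × Polynomial ℚ) : Module.End ℚ VV where
  toFun v := ((v.2 • m.1, v.2 • m.2), (0 : ℚ))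
  map_add' a b := by simp [add_smul, Prod.ext_iff]
  map_smul' c a := by simp [Prod.ext_iff, smul_smul]

def Tlin : (Polynomial ℚ × Polynomial ℚ) →ₗ[ℚ] Module.End ℚ VV where
  toFun := Tm
  map_add' m m' := by
    refine LinearMap.ext fun v => ?_
    simp [Tm, Prod.ext_iff, smul_add]
  map_smul' c m := by
    refine LinearMap.ext fun v => ?_
    simp [Tm, Prod.ext_iff, smul_smul, mul_comm]

def Fa : Module.End ℚ VV where
  toFun v := ((X * v.1.1, (0:Polynomial ℚ)), (0 : ℚ))
  map_add' a b := by simp [mul_add, Prod.ext_iff]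
  map_smul' c a := by simp [Prod.ext_iff, mul_smul_comm]

def Fb : Module.End ℚ VV where
  toFun v := (((0:Polynomial ℚ), X * v.1.2), (0 : ℚ))
  map_add' a b := by simp [mul_add, Prod.ext_iff]
  map_smul' c a := by simp [Prod.ext_iff, mul_smul_comm]

lemma Tm_mul_Tm (m m') : Tm m * Tm m' = 0 := by
  refine LinearMap.ext fun v => ?_; simp [Tm, Module.End.mul_apply]

lemma Fa_mul_Tm (m) : Fa * Tm m = Tm (X * m.1, 0) := by
  refine LinearMap.ext fun v => ?_
  simp [Tm, Fa, Module.End.mul_apply, Prod.ext_iff, mul_smul_comm]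

lemma Tm_mul_Fa (m) : Tm m * Fa = 0 := by
  refine LinearMap.ext fun v => ?_; simp [Tm, Fa, Module.End.mul_apply]

lemma Fb_mul_Tm (m) : Fb * Tm m = Tm (0, X * m.2) := by
  refine LinearMap.ext fun v => ?_
  simp [Tm, Fb, Module.End.mul_apply, Prod.ext_iff, mul_smul_comm]

lemma Tm_mul_Fb (m) : Tm m * Fb = 0 := by
  refine LinearMap.ext fun v => ?_; simp [Tm, Fb, Module.End.mul_apply]

lemma Fa_mul_Fb : Fa * Fb = 0 := by
  refine LinearMap.ext fun v => ?_; simp [Fa, Fb, Module.End.mul_apply]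

lemma Fb_mul_Fa : Fb * Fa = 0 := by
  refine LinearMap.ext fun v => ?_; simp [Fa, Fb, Module.End.mul_apply]

def Wsub : LieSubalgebra ℚ (Module.End ℚ VV) :=
  { LinearMap.range Tlin with
    lie_mem' := by
      rintro x y ⟨m, rfl⟩ ⟨m', rfl⟩
      show ⁅Tm m, Tm m'⁆ ∈ LinearMap.range Tlin
      rw [LieRing.of_associative_ring_bracket, Tm_mul_Tm, Tm_mul_Tm, sub_zero]
      exact zero_mem _ }

lemma Tm_mem_W (m) : Tm m ∈ Wsub := ⟨m, rfl⟩

lemma mem_W_iff {x : Module.End ℚ VV} : x ∈ Wsub ↔ ∃ m, Tm m = x := Iff.rfl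

def Ssub : LieSubalgebra ℚ (Module.End ℚ VV) := Wsub.normalizer

lemma Fa_mem_S : Fa ∈ Ssub := by
  rw [Ssub, LieSubalgebra.mem_normalizer_iff]
  rintro y ⟨m, rfl⟩
  show ⁅Fa, Tm m⁆ ∈ Wsub
  rw [LieRing.of_associative_ring_bracket, Fa_mul_Tm, Tm_mul_Fa, sub_zero]
  exact Tm_mem_W _

lemma Fb_mem_S : Fb ∈ Ssub := by
  rw [Ssub, LieSubalgebra.mem_normalizer_iff]
  rintro y ⟨m, rfl⟩
  show ⁅Fb, Tm m⁆ ∈ Wsub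
  rw [LieRing.of_associative_ring_bracket, Fb_mul_Tm, Tm_mul_Fb, sub_zero]
  exact Tm_mem_W _

lemma Tm_mem_S (m) : Tm m ∈ Ssub := Wsub.le_normalizer (Tm_mem_W m)

def s1 : Ssub := ⟨Fa, Fa_mem_S⟩
def s2 : Ssub := ⟨Fb, Fb_mem_S⟩
def s11 : Ssub := ⟨Tm (1, 0), Tm_mem_S _⟩
def s22 : Ssub := ⟨Tm (0, 1), Tm_mem_S _⟩

def Isub : LieIdeal ℚ Ssub :=
  { Wsub.toSubmodule.comap (Ssub.toSubmodule.subtype) with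
    lie_mem := by
      intro x m hm
      show ((⁅x, m⁆ : Ssub) : Module.End ℚ VV) ∈ Wsub
      rw [LieSubalgebra.coe_bracket]
      exact (Wsub.mem_normalizer_iff _).mp x.2 _ hm }

lemma mem_Isub {x : Ssub} : x ∈ Isub ↔ (x : Module.End ℚ VV) ∈ Wsub := Iff.rfl

lemma bracket_I_zero {a b : Ssub} (ha : a ∈ Isub) (hb : b ∈ Isub) : ⁅a, b⁆ = 0 := by
  obtain ⟨m, hm⟩ := mem_Isub.mp ha
  obtain ⟨m', hm'⟩ := mem_Isub.mp hb
  apply Subtype.ext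
  rw [LieSubalgebra.coe_bracket, ← hm, ← hm']
  show ⁅Tm m, Tm m'⁆ = _
  rw [LieRing.of_associative_ring_bracket, Tm_mul_Tm, Tm_mul_Tm, sub_zero]
  rfl

end MyAux

set_option maxHeartbeats 1000000
set_option synthInstance.maxHeartbeats 400000

noncomputable section Machinery
open Polynomial

lemma Tm_zero : Tm 0 = 0 := Tlin.map_zero

def fgen : Gamma → Ssub
  | .e1 => s1
  | .e11 => s11
  | .e2 => s2
  | .e22 => s22
  | .e12 => 0

def phi : FL →ₗ⁅ℚ⁆ Ssub := FreeLieAlgebra.lift ℚ fgen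

lemma phi_gen (x : Gamma) : phi (gen x) = fgen x := by
  simp [phi, gen, FreeLieAlgebra.lift_of_apply]

lemma coe_bracket_S (x y : Ssub) :
    ((⁅x, y⁆ : Ssub) : Module.End ℚ VV) = (x : Module.End ℚ VV) * y - y * x := by
  rw [LieSubalgebra.coe_bracket, LieRing.of_associative_ring_bracket]

lemma br12 : ⁅s1, s2⁆ = (0 : Ssub) := by
  apply Subtype.ext
  rw [coe_bracket_S]
  show Fa * Fb - Fb * Fa = ((0 : Ssub) : Module.End ℚ VV)
  rw [Fa_mul_Fb, Fb_mul_Fa, sub_zero]; rfl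

lemma br112 : ⁅s11, s2⁆ = (0 : Ssub) := by
  apply Subtype.ext
  rw [coe_bracket_S]
  show Tm (1, 0) * Fb - Fb * Tm (1, 0) = ((0 : Ssub) : Module.End ℚ VV)
  rw [Tm_mul_Fb, Fb_mul_Tm]
  show (0 : Module.End ℚ VV) - Tm (0, X * 0) = _
  rw [mul_zero, show ((0, (0:ℚ[X])) : ℚ[X] × ℚ[X]) = 0 from rfl, Tm_zero, sub_zero]; rfl

lemma br122 : ⁅s1, s22⁆ = (0 : Ssub) := by
  apply Subtype.ext
  rw [coe_bracket_S]
  show Fa * Tm (0, 1) - Tm (0, 1) * Fa = ((0 : Ssub) : Module.End ℚ VV)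
  rw [Fa_mul_Tm, Tm_mul_Fa, sub_zero]
  show Tm (X * 0, 0) = _
  rw [mul_zero, show (((0:ℚ[X]), (0:ℚ[X])) : ℚ[X] × ℚ[X]) = 0 from rfl, Tm_zero]; rfl

lemma br1122 : ⁅s11, s22⁆ = (0 : Ssub) := by
  apply Subtype.ext
  rw [coe_bracket_S]
  show Tm (1, 0) * Tm (0, 1) - Tm (0, 1) * Tm (1, 0) = ((0 : Ssub) : Module.End ℚ VV)
  rw [Tm_mul_Tm, Tm_mul_Tm, sub_zero]; rfl

lemma phi_rel : ∀ r ∈ relSet, phi r = 0 := by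
  intro r hr
  have h1 : phi (gen .e1) = s1 := phi_gen _
  have h2 : phi (gen .e2) = s2 := phi_gen _
  have h11 : phi (gen .e11) = s11 := phi_gen _
  have h22 : phi (gen .e22) = s22 := phi_gen _
  have h12 : phi (gen .e12) = 0 := phi_gen _
  rcases hr with rfl | rfl | rfl | rfl | rfl | rfl <;>
    simp only [LieHom.map_lie, map_sub, map_neg, h1, h2, h11, h22, h12,
      br12, br112, br122, br1122, lie_zero, neg_zero, sub_zero, zero_sub, sub_self]

lemma relIdeal_le_ker : relIdeal ≤ LieHom.ker phi := by
  rw [relIdeal, LieSubmodule.lieSpan_le]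
  intro r hr
  exact LieHom.mem_ker.mpr (phi_rel r hr)

def psi1lin : Lquot →ₗ[ℚ] Ssub :=
  Submodule.liftQ (LieSubmodule.toSubmodule relIdeal) phi.toLinearMap
    (fun x hx => LieHom.mem_ker.mp (relIdeal_le_ker hx))

lemma psi1lin_mk (x : FL) : psi1lin (mkL x) = phi x := rfl

def psi1 : Lquot →ₗ⁅ℚ⁆ Ssub :=
  { psi1lin with
    map_lie' := by
      intro x y
      obtain ⟨a, rfl⟩ := Submodule.Quotient.mk_surjective (LieSubmodule.toSubmodule relIdeal) x
      obtain ⟨b, rfl⟩ := Submodule.Quotient.mk_surjective (LieSubmodule.toSubmodule relIdeal) y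
      rw [← LieSubmodule.Quotient.mk_bracket (I := relIdeal)]
      show phi ⁅a, b⁆ = ⁅phi a, phi b⁆
      rw [LieHom.map_lie] }

lemma psi1_mk (x : FL) : psi1 (mkL x) = phi x := rfl

lemma NIdeal_le : NIdeal ≤ LieIdeal.comap psi1 Isub := by
  rw [NIdeal, LieSubmodule.lieSpan_le]
  rintro x (rfl | rfl | rfl) <;>
    · rw [SetLike.mem_coe, LieIdeal.mem_comap, psi1_mk, phi_gen]
      first
        | exact mem_Isub.mpr (Tm_mem_W _)
        | exact zero_mem _

lemma NN_le_ker : NN ≤ LieHom.ker psi1 := by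
  rw [NN, LieSubmodule.lieIdeal_oper_eq_span, LieSubmodule.lieSpan_le]
  rintro z ⟨⟨x, hx⟩, ⟨y, hy⟩, rfl⟩
  rw [SetLike.mem_coe, LieHom.mem_ker, LieHom.map_lie]
  exact bracket_I_zero (NIdeal_le hx) (NIdeal_le hy)

def psi2 : LPL →ₗ[ℚ] Ssub :=
  Submodule.liftQ (LieSubmodule.toSubmodule NN) psi1.toLinearMap
    (fun x hx => LieHom.mem_ker.mp (NN_le_ker hx))

lemma psi2_pl (x : FL) : psi2 (pl x) = phi x := rfl

lemma psi2_lie (a b : LPL) : psi2 ⁅a, b⁆ = ⁅psi2 a, psi2 b⁆ := by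
  obtain ⟨x, rfl⟩ := Submodule.Quotient.mk_surjective (LieSubmodule.toSubmodule NN) a
  obtain ⟨y, rfl⟩ := Submodule.Quotient.mk_surjective (LieSubmodule.toSubmodule NN) b
  rw [← LieSubmodule.Quotient.mk_bracket (I := NN)]
  show psi1 ⁅x, y⁆ = ⁅psi1 x, psi1 y⁆
  rw [LieHom.map_lie]

lemma psi2_ad (z w : LPL) (n : ℕ) :
    psi2 ((adPL z ^ n) w) = ((LieAlgebra.ad ℚ Ssub (psi2 z)) ^ n) (psi2 w) := by
  induction n with
  | zero => simp
  | succ k ih =>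
      rw [pow_succ', pow_succ', Module.End.mul_apply, Module.End.mul_apply, ← ih]
      show psi2 ⁅z, (adPL z ^ k) w⁆ = ⁅psi2 z, psi2 ((adPL z ^ k) w)⁆
      exact psi2_lie _ _

lemma ad_s1_pow (n : ℕ) :
    ((((LieAlgebra.ad ℚ Ssub s1) ^ n) s11 : Ssub) : Module.End ℚ VV) = Tm (X ^ n, 0) := by
  induction n with
  | zero => show (s11 : Module.End ℚ VV) = _; simp [s11]
  | succ k ih =>
      rw [pow_succ', Module.End.mul_apply]
      show ((⁅s1, ((LieAlgebra.ad ℚ Ssub s1) ^ k) s11⁆ : Ssub) : Module.End ℚ VV) = _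
      rw [coe_bracket_S, ih]
      show Fa * Tm (X ^ k, 0) - Tm (X ^ k, 0) * Fa = _
      rw [Fa_mul_Tm, Tm_mul_Fa, sub_zero]
      norm_num [pow_succ, mul_comm]

lemma ad_s2_pow (n : ℕ) :
    ((((LieAlgebra.ad ℚ Ssub s2) ^ n) s22 : Ssub) : Module.End ℚ VV) = Tm (0, X ^ n) := by
  induction n with
  | zero => show (s22 : Module.End ℚ VV) = _; simp [s22]
  | succ k ih =>
      rw [pow_succ', Module.End.mul_apply]
      show ((⁅s2, ((LieAlgebra.ad ℚ Ssub s2) ^ k) s22⁆ : Ssub) : Module.End ℚ VV) = _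
      rw [coe_bracket_S, ih]
      show Fb * Tm (0, X ^ k) - Tm (0, X ^ k) * Fb = _
      rw [Fb_mul_Tm, Tm_mul_Fb, sub_zero]
      norm_num [pow_succ, mul_comm]

def v0 : VV := ((0, 0), (1 : ℚ))

def ev : Ssub →ₗ[ℚ] VV :=
  (LinearMap.applyₗ v0).comp (LieSubalgebra.toSubmodule Ssub).subtype

lemma ev_apply (x : Ssub) : ev x = (x : Module.End ℚ VV) v0 := rfl

lemma ev_ad1 (n : ℕ) :
    ev (((LieAlgebra.ad ℚ Ssub s1) ^ n) s11) = ((X ^ n, 0), (0 : ℚ)) := by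
  rw [ev_apply, ad_s1_pow]
  simp [Tm, v0]

lemma ev_ad2 (n : ℕ) :
    ev (((LieAlgebra.ad ℚ Ssub s2) ^ n) s22) = ((0, X ^ n), (0 : ℚ)) := by
  rw [ev_apply, ad_s2_pow]
  simp [Tm, v0]

end Machinery

theorem stmt8 (n : ℕ) :
    LinearIndependent ℚ ![(adPL E1 ^ n) E11, (adPL E2 ^ n) E22] := by
  rw [LinearIndependent.pair_iff]
  intro s t h
  have e1 : psi2 E1 = s1 := by rw [E1, psi2_pl, phi_gen]; rfl
  have e11 : psi2 E11 = s11 := by rw [E11, psi2_pl, phi_gen]; rfl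
  have e2 : psi2 E2 = s2 := by rw [E2, psi2_pl, phi_gen]; rfl
  have e22 : psi2 E22 = s22 := by rw [E22, psi2_pl, phi_gen]; rfl
  have h2 : ev (psi2 (s • (adPL E1 ^ n) E11 + t • (adPL E2 ^ n) E22)) = ev (psi2 0) := by
    rw [h]
  rw [map_add, map_smul, map_smul, map_zero, map_zero, map_add, map_smul, map_smul,
    psi2_ad, psi2_ad, e1, e11, e2, e22, ev_ad1, ev_ad2] at h2
  have hX : (Polynomial.X ^ n : Polynomial ℚ) ≠ 0 := pow_ne_zero _ Polynomial.X_ne_zero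
  rw [Prod.ext_iff, Prod.ext_iff] at h2
  obtain ⟨⟨hs, ht⟩, -⟩ := h2
  simp only [Prod.fst_add, Prod.snd_add, Prod.smul_fst, Prod.smul_snd, smul_zero,
    add_zero, zero_add, Prod.fst_zero, Prod.snd_zero] at hs ht
  constructor
  · rcases smul_eq_zero.mp hs with h' | h'
    · exact h'
    · exact absurd h' hX
  · rcases smul_eq_zero.mp ht with h' | h'
    · exact h'
    · exact absurd h' hX
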